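/- Let W ∈ ℝ^{m×n} and let K_W be the cone generated by the rows of W, with dim K_W = rank(W) = r. If K_W is pointed, then ConeRank(W) = r; if K_W is non-pointed, then ConeRank(W) = r + 1. -/

import Mathlib

/-- The polyhedral cone generated by the rows of a matrix `W`:
the set of nonnegative linear combinations `λᵀ W` of the rows of `W`. -/
def coneOf {m n : ℕ} (W : Matrix (Fin m) (Fin n) ℝ) : Set (Fin n → ℝ) :=
  {x | ∃ l : Fin m → ℝ, 0 ≤ l ∧ x = Matrix.vecMul l W}

/-- `ConeRank(W)`: the minimum `k` such that there exists `V ∈ ℝ^{k×n}` with `K_W ⊆ K_V`. -/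
noncomputable def coneRank {m n : ℕ} (W : Matrix (Fin m) (Fin n) ℝ) : ℕ :=
  sInf {k : ℕ | ∃ V : Matrix (Fin k) (Fin n) ℝ, coneOf W ⊆ coneOf V}

/-!
If the cone of `W` lies in the cone of `k` vectors, its span lies in theirs, so `r ≤ k`; when
`k = r` the `k` vectors are linearly independent, so their cone, and with it the cone of `W`, is
pointed. Conversely, an `r`-dimensional space is the cone of the `r + 1` vertices of a simplex
around the origin. For a pointed cone, separating `0` from the convex hull of the nonzero rows
gives a functional `φ` positive on them; in coordinates `x = φ x • z + ∑ q_k • u_k` adapted to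
`φ`, the rows lie in the cone over a large `(r - 1)`-simplex in the slice `φ = 1`.
-/

open Module PointedCone Set Submodule

section Hull

variable {E ι : Type*} [AddCommGroup E] [Module ℝ E] [Fintype ι] {s : Set E} {v : ι → E}

lemma PointedCone.mem_hull_range_iff {x : E} :
    x ∈ hull ℝ (range v) ↔ ∃ c : ι → ℝ, 0 ≤ c ∧ ∑ i, c i • v i = x := by
  rw [mem_span_range_iff_exists_fun]
  constructor
  · rintro ⟨c, rfl⟩
    exact ⟨fun i => c i, fun i => (c i).2, by simp [Nonneg.coe_smul]⟩
  · rintro ⟨c, hc, rfl⟩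
    exact ⟨fun i => ⟨c i, hc i⟩, by simp [Nonneg.mk_smul]⟩

lemma finrank_span_le_finrank_span_range_of_subset_hull (h : s ⊆ hull ℝ (range v)) :
    finrank ℝ (span ℝ s) ≤ finrank ℝ (span ℝ (range v)) :=
  have := FiniteDimensional.span_of_finite ℝ (finite_range v)
  Submodule.finrank_mono (span_le.2 fun _ hx => hull_le_span ℝ _ (h hx))

lemma finrank_span_le_card_of_subset_hull (h : s ⊆ hull ℝ (range v)) :
    finrank ℝ (span ℝ s) ≤ Fintype.card ι :=
  (finrank_span_le_finrank_span_range_of_subset_hull h).trans (finrank_range_le_card v)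

lemma linearIndependent_of_subset_hull (h : s ⊆ hull ℝ (range v))
    (hcard : Fintype.card ι ≤ finrank ℝ (span ℝ s)) : LinearIndependent ℝ v :=
  linearIndependent_iff_card_eq_finrank_span.2 <| le_antisymm
    (hcard.trans (finrank_span_le_finrank_span_range_of_subset_hull h)) (finrank_range_le_card v)

lemma salient_hull_range_of_linearIndependent (hv : LinearIndependent ℝ v) :
    (hull ℝ (range v) : ConvexCone ℝ E).Salient := by
  intro x hx hx0 hnx
  obtain ⟨a, ha, rfl⟩ := mem_hull_range_iff.1 hx
  obtain ⟨b, hb, hab⟩ := mem_hull_range_iff.1 hnx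
  have hsum : ∑ i, (a i + b i) • v i = 0 := by
    simp only [add_smul, Finset.sum_add_distrib, hab, add_neg_cancel]
  have hzero := Fintype.linearIndependent_iff.1 hv _ hsum
  have ha0 : a = 0 := funext fun i => show a i = 0 by
    have hai : 0 ≤ a i := ha i
    have hbi : 0 ≤ b i := hb i
    linarith [hzero i]
  simp [ha0] at hx0

lemma PointedCone.zero_notMem_convexHull_of_salient {C : PointedCone ℝ E}
    (hC : (C : ConvexCone ℝ E).Salient) : (0 : E) ∉ convexHull ℝ ((C : Set E) \ {0}) := by
  classical
  intro h
  obtain ⟨ι, _, w, y, hw0, hw1, hy, hsum⟩ := mem_convexHull_iff_exists_fintype.1 h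
  obtain ⟨j, -, hj⟩ := Finset.exists_lt_of_sum_lt (s := Finset.univ) (f := 0) (g := w)
    (by simp [hw1])
  refine hC (w j • y j) (C.smul_mem (hw0 j) (hy j).1) (smul_ne_zero hj.ne' (hy j).2) ?_
  rw [← Finset.sum_erase_add _ _ (Finset.mem_univ j)] at hsum
  rw [← eq_neg_of_add_eq_zero_left hsum]
  exact C.sum_mem fun i _ => C.smul_mem (hw0 i) (hy i).1

end Hull

lemma coneOf_eq_hull {m n : ℕ} (W : Matrix (Fin m) (Fin n) ℝ) :
    coneOf W = hull ℝ (range W) := by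
  ext x
  rw [SetLike.mem_coe, mem_hull_range_iff (v := W)]
  simp [coneOf, Matrix.vecMul_eq_sum, eq_comm]

section Simplex

variable {E : Type*} [AddCommGroup E] [Module ℝ E]

/-- The corners sum to `z`, and the `u k` are their differences from the first corner. -/
noncomputable def simplexCorners {s : ℕ} (z : E) (u : Fin s → E) : Fin (s + 1) → E :=
  let w := ((s : ℝ) + 1)⁻¹ • (z - ∑ k, u k)
  Fin.cons w fun k => w + u k

lemma mem_hull_simplexCorners {s : ℕ} (z : E) (u : Fin s → E) {t : ℝ} {q : Fin s → ℝ}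
    (hq : ∑ k, |q k| ≤ t) : t • z + ∑ k, q k • u k ∈ hull ℝ (range (simplexCorners z u)) := by
  refine mem_hull_range_iff.2 ⟨Fin.cons (t - ∑ k, q k) fun k => q k + t, ?_, ?_⟩
  · refine Fin.cases ?_ fun k => ?_
    · simpa using (Finset.sum_le_sum fun k _ => le_abs_self (q k)).trans hq
    · have := (Finset.single_le_sum (fun k _ => abs_nonneg (q k)) (Finset.mem_univ k)).trans hq
      simp only [Fin.cons_succ, Pi.zero_apply]
      linarith [neg_abs_le (q k)]
  · have hs : ((s : ℝ) + 1) * ((s : ℝ) + 1)⁻¹ = 1 := mul_inv_cancel₀ (by positivity)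
    simp only [Fin.sum_univ_succ, simplexCorners, Fin.cons_zero, Fin.cons_succ, smul_add,
      Finset.sum_add_distrib, ← Finset.sum_smul, add_smul, ← Finset.smul_sum, Finset.sum_const,
      Finset.card_univ, Fintype.card_fin, nsmul_eq_mul]
    linear_combination (norm := module) hs • (t • (z - ∑ k, u k))

lemma exists_subset_hull_fin_succ {r : ℕ} (S : Submodule ℝ E) [FiniteDimensional ℝ S]
    (hS : finrank ℝ S = r) : ∃ g : Fin (r + 1) → E, (S : Set E) ⊆ hull ℝ (range g) := by
  let b := Module.finBasisOfFinrankEq ℝ S hS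
  refine ⟨simplexCorners 0 fun k => b k, fun x hx => ?_⟩
  have hx' : ∑ k, b.repr ⟨x, hx⟩ k • (b k : E) = x := by
    simpa only [Submodule.coe_sum, Submodule.coe_smul] using
      congrArg Subtype.val (b.sum_repr ⟨x, hx⟩)
  simpa [hx'] using mem_hull_simplexCorners (q := b.repr ⟨x, hx⟩) 0 (fun k => (b k : E)) le_rfl

lemma exists_eq_smul_add_sum_of_finrank_eq_succ (φ : E →ₗ[ℝ] ℝ) {S : Submodule ℝ E} {s : ℕ}
    (hS : finrank ℝ S = s + 1) {z : E} (hzS : z ∈ S) (hz : φ z = 1) :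
    ∃ u : Fin s → E, ∀ x ∈ S, ∃ q : Fin s → ℝ, x = φ x • z + ∑ k, q k • u k := by
  have : FiniteDimensional ℝ S := Module.finite_of_finrank_eq_succ hS
  let ψ := φ.domRestrict S
  have hψ : Function.Surjective ψ := fun a => ⟨a • ⟨z, hzS⟩, by simp [ψ, hz]⟩
  have hker : finrank ℝ (LinearMap.ker ψ) = s := by
    have := LinearMap.finrank_range_add_finrank_ker ψ
    rw [LinearMap.range_eq_top.2 hψ, finrank_top, Module.finrank_self, hS] at this
    omega
  let b := Module.finBasisOfFinrankEq ℝ _ hker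
  refine ⟨fun k => ((b k : S) : E), fun x hx => ?_⟩
  let y : LinearMap.ker ψ := ⟨⟨x, hx⟩ - φ x • ⟨z, hzS⟩, by simp [ψ, hz]⟩
  refine ⟨b.repr y, ?_⟩
  have hy := congrArg (fun y : LinearMap.ker ψ => ((y : S) : E)) (b.sum_repr y)
  simp only [Submodule.coe_sum, Submodule.coe_smul] at hy
  beta_reduce
  rw [hy]
  simp [y]

lemma exists_range_subset_hull_of_pos {ι : Type*} [Finite ι] (φ : E →ₗ[ℝ] ℝ)
    {S : Submodule ℝ E} {s : ℕ} (hS : finrank ℝ S = s + 1) {z : E} (hzS : z ∈ S) (hz : φ z = 1)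
    {v : ι → E} (hvS : ∀ i, v i ∈ S) (hv : ∀ i, v i ≠ 0 → 0 < φ (v i)) :
    ∃ g : Fin (s + 1) → E, range v ⊆ hull ℝ (range g) := by
  obtain ⟨u, hu⟩ := exists_eq_smul_add_sum_of_finrank_eq_succ φ hS hzS hz
  choose q hq using fun i => hu (v i) (hvS i)
  obtain ⟨M, hM⟩ := Finite.bddAbove_range fun i => (∑ k, |q i k|) / φ (v i)
  have hM₁ : 0 < max M 1 := lt_max_of_lt_right one_pos
  refine ⟨simplexCorners z fun k => max M 1 • u k, ?_⟩
  rintro _ ⟨i, rfl⟩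
  rcases eq_or_ne (v i) 0 with hi | hi
  · rw [hi]
    exact zero_mem _
  have hbound : ∑ k, |q i k / max M 1| ≤ φ (v i) := by
    have h := (hM ⟨i, rfl⟩).trans (le_max_left M 1)
    rw [div_le_iff₀ (hv i hi)] at h
    simp only [abs_div, abs_of_pos hM₁, ← Finset.sum_div]
    rw [div_le_iff₀ hM₁]
    linarith
  convert mem_hull_simplexCorners z (fun k => max M 1 • u k) hbound using 1
  conv_lhs => rw [hq i]
  simp [smul_smul, div_mul_cancel₀ _ hM₁.ne']

end Simplex

section Separation

variable {E ι : Type*} [NormedAddCommGroup E] [NormedSpace ℝ E] [Finite ι] {v : ι → E}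

lemma exists_pos_of_salient_hull_range (hv : (hull ℝ (range v) : ConvexCone ℝ E).Salient) :
    ∃ φ : StrongDual ℝ E, ∀ i, v i ≠ 0 → 0 < φ (v i) := by
  have h0 : (0 : E) ∉ convexHull ℝ (range v \ {0}) := fun h =>
    zero_notMem_convexHull_of_salient hv (convexHull_mono (sdiff_subset_sdiff_left subset_hull) h)
  obtain ⟨φ, a, hφ0, hφ⟩ := geometric_hahn_banach_point_closed (convex_convexHull ℝ _)
    ((finite_range v).sdiff.isCompact_convexHull ℝ).isClosed h0
  rw [map_zero] at hφ0
  exact ⟨φ, fun i hi => hφ0.trans (hφ _ (subset_convexHull ℝ _ ⟨⟨i, rfl⟩, hi⟩))⟩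

lemma exists_range_subset_hull_of_salient (hv : (hull ℝ (range v) : ConvexCone ℝ E).Salient)
    {r : ℕ} (hr : finrank ℝ (span ℝ (range v)) = r) :
    ∃ g : Fin r → E, range v ⊆ hull ℝ (range g) := by
  obtain ⟨φ, hφ⟩ := exists_pos_of_salient_hull_range hv
  have : FiniteDimensional ℝ (span ℝ (range v)) := .span_of_finite ℝ (finite_range v)
  rcases r with _ | s
  · refine ⟨0, ?_⟩
    rw [Submodule.finrank_eq_zero, span_eq_bot] at hr
    rintro _ ⟨i, rfl⟩
    rw [hr _ ⟨i, rfl⟩]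
    exact zero_mem _
  obtain ⟨i, hi⟩ : ∃ i, v i ≠ 0 := by
    by_contra! h
    have hbot : span ℝ (range v) = ⊥ := span_eq_bot.2 (by rintro _ ⟨i, rfl⟩; exact h i)
    rw [Submodule.finrank_eq_zero.2 hbot] at hr
    omega
  exact exists_range_subset_hull_of_pos φ.toLinearMap hr
    (smul_mem _ (φ (v i))⁻¹ (subset_span ⟨i, rfl⟩)) (by simp [(hφ i hi).ne'])
    (fun j => subset_span ⟨j, rfl⟩) hφ

end Separation

theorem coneRank_pointed_nonpointed_general {m n r : ℕ} (W : Matrix (Fin m) (Fin n) ℝ)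
    (hdim : Module.finrank ℝ ↥(Submodule.span ℝ (coneOf W)) = r) :
    ((∀ x ∈ coneOf W, x ≠ 0 → -x ∉ coneOf W) → coneRank W = r) ∧
    ((¬ ∀ x ∈ coneOf W, x ≠ 0 → -x ∉ coneOf W) → coneRank W = r + 1) := by
  rw [coneOf_eq_hull] at hdim
  simp only [coneRank, coneOf_eq_hull, SetLike.coe_subset_coe]
  have lower : ∀ k (V : Matrix (Fin k) (Fin n) ℝ), hull ℝ (range W) ≤ hull ℝ (range V) → r ≤ k :=
    fun k V hV => by simpa [hdim] using finrank_span_le_card_of_subset_hull (v := V) hV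
  refine ⟨fun hsal => IsLeast.csInf_eq ⟨?_, fun k ⟨V, hV⟩ => lower k V hV⟩,
    fun hflat => IsLeast.csInf_eq ⟨?_, ?_⟩⟩
  · rw [span_span_of_tower] at hdim
    obtain ⟨g, hg⟩ := exists_range_subset_hull_of_salient (v := W) hsal hdim
    exact ⟨Matrix.of g, span_le.2 hg⟩
  · obtain ⟨g, hg⟩ := exists_subset_hull_fin_succ _ hdim
    exact ⟨Matrix.of g, fun x hx => hg (subset_span hx)⟩
  · rintro k ⟨V, hV⟩
    refine Nat.succ_le_of_lt ((lower k V hV).lt_of_ne ?_)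
    rintro rfl
    have hV_indep := linearIndependent_of_subset_hull (v := V) hV (by simp [hdim])
    exact hflat fun x hx hx0 hnx =>
      salient_hull_range_of_linearIndependent hV_indep x (hV hx) hx0 (hV hnx)

/-- Let `K_W` be the cone generated by the rows of `W`, with
`dim K_W = rank(W) = r`.  If `K_W` is pointed then `ConeRank(W) = r`; if `K_W` is
non-pointed then `ConeRank(W) = r + 1`. -/
theorem coneRank_pointed_nonpointed {m n r : ℕ} (W : Matrix (Fin m) (Fin n) ℝ)
    (hdim : Module.finrank ℝ ↥(Submodule.span ℝ (coneOf W)) = r)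
    (hrank : W.rank = r) :
    ((∀ x ∈ coneOf W, x ≠ 0 → -x ∉ coneOf W) → coneRank W = r) ∧
    ((¬ ∀ x ∈ coneOf W, x ≠ 0 → -x ∉ coneOf W) → coneRank W = r + 1) :=
  coneRank_pointed_nonpointed_general W hdim
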